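/- Assume 𝒰(T) is bounded in norm as T → 0⁺ and 𝒫(T) = CPCᵀ + R/T with R positive definite. Then the detection gap E[Δg_k](T) = 2·trace(Cᵀ 𝒫(T)⁻¹ C 𝒰(T))·𝒯 satisfies E[Δg_k](T) → 0 as T → 0⁺. -/

import Mathlib

open Matrix Filter Topology

attribute [local instance] Matrix.linftyOpNormedAddCommGroup Matrix.linftyOpNormedSpace
  Matrix.linftyOpNormedRing Matrix.linftyOpNormedAlgebra

/-!
Writing `𝒫(T) = T⁻¹ (T C P Cᵀ + R)` gives `𝒫(T)⁻¹ = T (T C P Cᵀ + R)⁻¹`. Inversion is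
continuous at the invertible matrix `R`, so `(T C P Cᵀ + R)⁻¹ → R⁻¹` and hence `𝒫(T)⁻¹ → 0`.
Multiplying by the bounded `𝒰(T)` keeps the limit `0`, and the trace is continuous.
-/

namespace Matrix

variable {ι : Type*} [Fintype ι] [DecidableEq ι]

-- Junk values make this unconditional: for singular `A` or `k = 0` both sides vanish.
theorem inv_smul₀ {K : Type*} [Field K] (k : K) (A : Matrix ι ι K) : (k • A)⁻¹ = k⁻¹ • A⁻¹ := by
  rcases eq_or_ne k 0 with rfl | hk
  · simp
  by_cases hA : IsUnit A.det
  · exact inv_smul' A (Units.mk0 k hk) hA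
  · have hkA : ¬IsUnit (k • A).det := by simpa [det_smul, hk] using hA
    rw [nonsing_inv_apply_not_isUnit _ hA, nonsing_inv_apply_not_isUnit _ hkA, smul_zero]

theorem inv_add_inv_smul {K : Type*} [Field K] (A B : Matrix ι ι K) {t : K} (ht : t ≠ 0) :
    (A + t⁻¹ • B)⁻¹ = t • (t • A + B)⁻¹ := by
  rw [← inv_smul_smul₀ ht A, ← smul_add, inv_smul₀, inv_inv, smul_inv_smul₀ ht]

theorem tendsto_inv_add_inv_smul_nhdsNE_zero {𝕜 : Type*} [NormedField 𝕜] (A : Matrix ι ι 𝕜)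
    {B : Matrix ι ι 𝕜} (hB : IsUnit B.det) :
    Tendsto (fun t : 𝕜 => (A + t⁻¹ • B)⁻¹) (𝓝[≠] 0) (𝓝 0) := by
  have hinv : ContinuousAt Inv.inv ((0 : 𝕜) • A + B) := by
    simpa using continuousAt_matrix_inv B (by simpa using continuousAt_inv₀ hB.ne_zero)
  have hcont : ContinuousAt (fun t : 𝕜 => t • (t • A + B)⁻¹) 0 :=
    continuousAt_id.smul (hinv.comp (f := fun t : 𝕜 => t • A + B) (by fun_prop))
  have hlim : Tendsto (fun t : 𝕜 => t • (t • A + B)⁻¹) (𝓝[≠] 0) (𝓝 0) := by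
    simpa using hcont.tendsto.mono_left nhdsWithin_le_nhds
  refine hlim.congr' ?_
  filter_upwards [self_mem_nhdsWithin] with t ht
  exact (inv_add_inv_smul A B ht).symm

end Matrix

theorem detection_gap_vanishes_general {m n : ℕ} (𝒯 : ℕ)
    (C : Matrix (Fin m) (Fin n) ℝ) (P : Matrix (Fin n) (Fin n) ℝ)
    (R : Matrix (Fin m) (Fin m) ℝ) (𝒰 : ℝ → Matrix (Fin n) (Fin n) ℝ)
    (hR : R.PosDef)
    (hbound : ∃ M ε : ℝ, 0 < ε ∧ ∀ T ∈ Set.Ioo (0 : ℝ) ε, ‖𝒰 T‖ ≤ M) :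
    Tendsto (fun T : ℝ => 2 * (Cᵀ * (C * P * Cᵀ + T⁻¹ • R)⁻¹ * C * 𝒰 T).trace * 𝒯)
      (𝓝[>] 0) (𝓝 0) := by
  obtain ⟨M, ε, hε, hM⟩ := hbound
  have hinv : Tendsto (fun T : ℝ => (C * P * Cᵀ + T⁻¹ • R)⁻¹) (𝓝[>] 0) (𝓝 0) :=
    (tendsto_inv_add_inv_smul_nhdsNE_zero (C * P * Cᵀ) hR.det_pos.ne'.isUnit).mono_left
      (nhdsGT_le_nhdsNE 0)
  have hgain : Tendsto (fun T : ℝ => Cᵀ * (C * P * Cᵀ + T⁻¹ • R)⁻¹ * C) (𝓝[>] 0) (𝓝 0) := by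
    simpa [Function.comp_def] using
      (((continuous_const.matrix_mul continuous_id).matrix_mul continuous_const).tendsto 0).comp
        hinv
  have hU : IsBoundedUnder (· ≤ ·) (𝓝[>] 0) (norm ∘ 𝒰) :=
    ⟨M, eventually_map.2 (eventually_of_mem (Ioo_mem_nhdsGT hε) hM)⟩
  have htrace := (continuous_id.matrix_trace.tendsto 0).comp (hgain.zero_mul_isBoundedUnder_le hU)
  simpa using (htrace.const_mul 2).mul_const (𝒯 : ℝ)

/-- If `𝒰(T)` is bounded in norm as `T → 0⁺` and `𝒫(T) = C P Cᵀ + R / T` with `R` positive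
definite, then the detection gap `E[Δg_k](T) = 2 trace(Cᵀ 𝒫(T)⁻¹ C 𝒰(T)) 𝒯` tends to `0` as
`T → 0⁺`. -/
theorem detection_gap_vanishes {m n : ℕ} (𝒯 : ℕ)
    (C : Matrix (Fin m) (Fin n) ℝ) (P : Matrix (Fin n) (Fin n) ℝ)
    (R : Matrix (Fin m) (Fin m) ℝ) (𝒰 : ℝ → Matrix (Fin n) (Fin n) ℝ)
    (hP : P.PosSemidef) (hR : R.PosDef)
    (hbound : ∃ M ε : ℝ, 0 < ε ∧ ∀ T ∈ Set.Ioo (0 : ℝ) ε, ‖𝒰 T‖ ≤ M) :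
    Tendsto (fun T : ℝ => 2 * (Cᵀ * (C * P * Cᵀ + T⁻¹ • R)⁻¹ * C * 𝒰 T).trace * 𝒯)
      (𝓝[>] 0) (𝓝 0) :=
  detection_gap_vanishes_general 𝒯 C P R 𝒰 hR hbound
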